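/- arXiv:1605.02873 — 2 statements merged into one kernel-verified Lean document; each statement's English description precedes it below -/
import Mathlib

section
/- The map ρ : T(d,ℝ)_+ → GL(d,ℝ), ρ(h) = √(h_{1,1}) · h^{−T}, is a group homomorphism, and for all b ∈ ℝ^d and all h ∈ T(d,ℝ)_+ one has ρ(h)^{−T} σ_b ρ(h)^{−1} = σ_{hb}. -/
open Matrix

noncomputable section

/-- The symmetric matrix `σ_b` with `(σ_b)_{1,1} = b_1`,
`(σ_b)_{1,j} = (σ_b)_{j,1} = b_j/2` for `j ≥ 2`, and all other entries zero. -/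
def sigmaMat (d : ℕ) [NeZero d] (b : Fin d → ℝ) : Matrix (Fin d) (Fin d) ℝ :=
  Matrix.of fun i j =>
    if i = 0 ∧ j = 0 then b 0
    else if i = 0 then b j / 2
    else if j = 0 then b i / 2
    else 0

/-- `T(d,ℝ)_+`: invertible upper triangular matrices with positive `(1,1)` entry. -/
def Tplus (d : ℕ) [NeZero d] : Set (Matrix (Fin d) (Fin d) ℝ) :=
  {h | IsUnit h ∧ 0 < h 0 0 ∧ ∀ i j : Fin d, j < i → h i j = 0}

/-- The map `ρ(h) = √(h_{1,1}) · h^{-T}`. -/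
def rhoMap (d : ℕ) [NeZero d] (h : Matrix (Fin d) (Fin d) ℝ) : Matrix (Fin d) (Fin d) ℝ :=
  Real.sqrt (h 0 0) • (h⁻¹)ᵀ

/-!
Write `e` for the first basis vector, so that `σ_b = (e bᵀ + b eᵀ) / 2`. Every upper triangular
`h` has `h e = h₁₁ e`, hence `h σ_b hᵀ = h₁₁ σ_{hb}`; since `ρ(h)⁻¹ = h₁₁^{-1/2} hᵀ`, conjugating
`σ_b` by `ρ(h)⁻¹` gives `σ_{hb}`. The same eigenvector gives `(h₁h₂)₁₁ = (h₁)₁₁ (h₂)₁₁`, which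
together with `(h₁h₂)^{-T} = h₁^{-T} h₂^{-T}` makes `ρ` multiplicative.
-/

namespace Matrix.BlockTriangular

variable {n R : Type*} [Fintype n] [LinearOrder n] [Semiring R]
  {M N : Matrix n n R} {i₀ : n}

theorem mulVec_single_one_of_isBot [DecidableEq n] (hM : M.BlockTriangular id)
    (hi₀ : IsBot i₀) :
    M *ᵥ Pi.single i₀ 1 = M i₀ i₀ • Pi.single i₀ 1 := by
  ext i
  rw [mulVec_single_one]
  rcases eq_or_ne i i₀ with rfl | hi
  · simp
  · simp [hi, hM ((hi₀ i).lt_of_ne' hi)]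

theorem mul_apply_of_isBot (hN : N.BlockTriangular id) (hi₀ : IsBot i₀) :
    (M * N) i₀ i₀ = M i₀ i₀ * N i₀ i₀ := by
  rw [mul_apply, Finset.sum_eq_single i₀ (fun k _ hk => by rw [hN ((hi₀ k).lt_of_ne' hk),
    mul_zero]) (by simp)]

end Matrix.BlockTriangular

section

variable {d : ℕ} [NeZero d]

theorem sigmaMat_eq_smul_add_vecMulVec (b : Fin d → ℝ) :
    sigmaMat d b =
      (2⁻¹ : ℝ) • (vecMulVec (Pi.single 0 1) b + vecMulVec b (Pi.single 0 1)) := by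
  ext i j
  rcases eq_or_ne i 0 with rfl | hi <;> rcases eq_or_ne j 0 with rfl | hj <;>
    simp [sigmaMat, vecMulVec_apply, *] <;> ring

theorem mul_sigmaMat_mul_transpose {h : Matrix (Fin d) (Fin d) ℝ} (hh : h.BlockTriangular id)
    (b : Fin d → ℝ) : h * sigmaMat d b * hᵀ = h 0 0 • sigmaMat d (h *ᵥ b) := by
  rw [sigmaMat_eq_smul_add_vecMulVec, sigmaMat_eq_smul_add_vecMulVec, Matrix.mul_smul,
    Matrix.smul_mul, mul_add, add_mul, mul_vecMulVec, mul_vecMulVec, vecMulVec_mul, vecMulVec_mul,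
    vecMul_transpose, vecMul_transpose, hh.mulVec_single_one_of_isBot isBot_zero,
    smul_vecMulVec, vecMulVec_smul, ← smul_add, smul_comm]

theorem rhoMap_mul_smul_transpose {h : Matrix (Fin d) (Fin d) ℝ} (hh : IsUnit h)
    (h₀ : 0 < h 0 0) : rhoMap d h * ((√(h 0 0))⁻¹ • hᵀ) = 1 := by
  rw [rhoMap, Matrix.smul_mul, Matrix.mul_smul, smul_smul, ← transpose_mul,
    mul_nonsing_inv h ((isUnit_iff_isUnit_det h).mp hh), transpose_one,
    mul_inv_cancel₀ (Real.sqrt_pos.mpr h₀).ne', one_smul]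

theorem isUnit_rhoMap {h : Matrix (Fin d) (Fin d) ℝ} (hh : IsUnit h) (h₀ : 0 < h 0 0) :
    IsUnit (rhoMap d h) :=
  (isUnit_iff_isUnit_det _).mpr (isUnit_det_of_right_inverse (rhoMap_mul_smul_transpose hh h₀))

theorem inv_rhoMap {h : Matrix (Fin d) (Fin d) ℝ} (hh : IsUnit h) (h₀ : 0 < h 0 0) :
    (rhoMap d h)⁻¹ = (√(h 0 0))⁻¹ • hᵀ :=
  inv_eq_right_inv (rhoMap_mul_smul_transpose hh h₀)

theorem rhoMap_mul {h₁ h₂ : Matrix (Fin d) (Fin d) ℝ} (h₁₀ : 0 ≤ h₁ 0 0)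
    (hh₂ : h₂.BlockTriangular id) : rhoMap d (h₁ * h₂) = rhoMap d h₁ * rhoMap d h₂ := by
  rw [rhoMap, rhoMap, rhoMap, hh₂.mul_apply_of_isBot isBot_zero, Real.sqrt_mul h₁₀,
    Matrix.mul_inv_rev, transpose_mul, Matrix.smul_mul, Matrix.mul_smul, smul_smul]

theorem transpose_inv_rhoMap_mul_sigmaMat_mul_inv_rhoMap {h : Matrix (Fin d) (Fin d) ℝ}
    (hh : IsUnit h) (h₀ : 0 < h 0 0) (hT : h.BlockTriangular id) (b : Fin d → ℝ) :
    ((rhoMap d h)⁻¹)ᵀ * sigmaMat d b * (rhoMap d h)⁻¹ = sigmaMat d (h *ᵥ b) := by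
  have hc : (√(h 0 0))⁻¹ * (√(h 0 0))⁻¹ * h 0 0 = 1 := by
    rw [← mul_inv, Real.mul_self_sqrt h₀.le, inv_mul_cancel₀ h₀.ne']
  rw [inv_rhoMap hh h₀, transpose_smul, transpose_transpose, Matrix.smul_mul, Matrix.smul_mul,
    Matrix.mul_smul, smul_smul, mul_sigmaMat_mul_transpose hT, smul_smul, hc, one_smul]

end

/-- The map `ρ : T(d,ℝ)_+ → GL(d,ℝ)`, `ρ(h) = √(h_{1,1}) · h^{-T}`, is a
group homomorphism, and for all `b ∈ ℝ^d` and `h ∈ T(d,ℝ)_+` one has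
`ρ(h)^{-T} σ_b ρ(h)^{-1} = σ_{hb}`. -/
theorem statement13 (d : ℕ) [NeZero d] :
    (∀ h ∈ Tplus d, IsUnit (rhoMap d h)) ∧
    (∀ h₁ ∈ Tplus d, ∀ h₂ ∈ Tplus d, rhoMap d (h₁ * h₂) = rhoMap d h₁ * rhoMap d h₂) ∧
    (∀ h ∈ Tplus d, ∀ b : Fin d → ℝ,
      ((rhoMap d h)⁻¹)ᵀ * sigmaMat d b * (rhoMap d h)⁻¹ = sigmaMat d (h.mulVec b)) := by
  refine ⟨fun h ⟨hh, h₀, _⟩ => isUnit_rhoMap hh h₀, ?_, ?_⟩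
  · rintro h₁ ⟨-, h₁₀, -⟩ h₂ ⟨-, -, hT₂⟩
    exact rhoMap_mul h₁₀.le fun i j => hT₂ i j
  · rintro h ⟨hh, h₀, hT⟩ b
    exact transpose_inv_rhoMap_mul_sigmaMat_mul_inv_rhoMap hh h₀ (fun i j => hT i j) b

end
end

section
/- Fix h ∈ T(d,ℝ)_+ and b ∈ ℝ^d. For functions f : ℝ^d → ℂ define, for ξ ∈ ℝ^d with ξ_1 < 0: (Ψf)(ξ) = 2^{(d−2)/4} |ξ_1|^{−d/4} · f(√2 ξ / √(−ξ_1)); (Φf)(ξ) = 2^{(1−d)/2} |ξ_1|^{d/2} · f(−(1/2) ξ_1 ξ); and (μ_{b,h} f)(ξ) = |det ρ(h)|^{−1/2} e^{iπ⟨σ_b ξ, ξ⟩} f(ρ(h)^{−1} ξ). Then for every f : ℝ^d → ℂ and every ξ ∈ ℝ^d with ξ_1 < 0, the intertwining identity (Ψ(μ_{b,h}(Φ f)))(ξ) = |det h|^{1/2} e^{−2πi⟨b,ξ⟩} f(h^T ξ) holds; that is, conjugation by Ψ carries the restricted metaplectic action μ_{b,h} into the Fourier side of the quasi-regular representation. 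-/
/-!
`Φ` and `Ψ` are, up to normalising factors, the substitution operators of
`Q(ξ) = -(1/2) ξ₁ ξ` and of its inverse `P(ξ) = √2 ξ / √(-ξ₁)` on `{ξ₁ < 0}`.
`Q` is homogeneous of degree `2`, and for upper triangular `h` one has `Q(hᵀx) = h₁₁ hᵀ Q(x)`;
since `ρ(h)⁻¹ = h₁₁^{-1/2} hᵀ`, this gives `Q(ρ(h)⁻¹ P ξ) = hᵀξ`. The chirp turns into a
character because `⟨σ_b η, η⟩ = η₁ ⟨b, η⟩ = -2 ⟨b, Q η⟩`, and the powers of `2`, `|ξ₁|` and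
`h₁₁` in the three normalising factors combine to `|det h|^{1/2}`.
-/

open Matrix

noncomputable section

/-- The standard inner product on `ℝ^d`. -/
def dotProd (d : ℕ) (x y : Fin d → ℝ) : ℝ := ∑ i, x i * y i

/-- `(Ψf)(ξ) = 2^{(d-2)/4} |ξ_1|^{-d/4} · f(√2·ξ/√(-ξ_1))`. -/
def PsiOp (d : ℕ) [NeZero d] (f : (Fin d → ℝ) → ℂ) (ξ : Fin d → ℝ) : ℂ :=
  (((2 : ℝ) ^ (((d : ℝ) - 2) / 4) * |ξ 0| ^ (-(d : ℝ) / 4) : ℝ) : ℂ) *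
    f ((Real.sqrt 2 / Real.sqrt (-ξ 0)) • ξ)

/-- `(Φf)(ξ) = 2^{(1-d)/2} |ξ_1|^{d/2} · f(-(1/2)·ξ_1·ξ)`. -/
def PhiOp (d : ℕ) [NeZero d] (f : (Fin d → ℝ) → ℂ) (ξ : Fin d → ℝ) : ℂ :=
  (((2 : ℝ) ^ ((1 - (d : ℝ)) / 2) * |ξ 0| ^ ((d : ℝ) / 2) : ℝ) : ℂ) *
    f ((-(1 / 2) * ξ 0) • ξ)

/-- `(μ_{b,h}f)(ξ) = |det ρ(h)|^{-1/2} e^{iπ⟨σ_b ξ, ξ⟩} f(ρ(h)⁻¹ ξ)`. -/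
def muOp (d : ℕ) [NeZero d] (b : Fin d → ℝ) (h : Matrix (Fin d) (Fin d) ℝ)
    (f : (Fin d → ℝ) → ℂ) (ξ : Fin d → ℝ) : ℂ :=
  ((|((rhoMap d h).det)| ^ (-(1 : ℝ) / 2) : ℝ) : ℂ) *
    Complex.exp (((Real.pi * dotProd d ((sigmaMat d b).mulVec ξ) ξ : ℝ) : ℂ) * Complex.I) *
    f ((rhoMap d h)⁻¹.mulVec ξ)

def quadMap (d : ℕ) [NeZero d] (ξ : Fin d → ℝ) : Fin d → ℝ := (-(1 / 2) * ξ 0) • ξ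

def quadMapInv (d : ℕ) [NeZero d] (ξ : Fin d → ℝ) : Fin d → ℝ :=
  (Real.sqrt 2 / Real.sqrt (-ξ 0)) • ξ

section QuadraticMap

variable {d : ℕ} [NeZero d]

lemma PsiOp_apply (f : (Fin d → ℝ) → ℂ) (ξ : Fin d → ℝ) :
    PsiOp d f ξ = (((2 : ℝ) ^ (((d : ℝ) - 2) / 4) * |ξ 0| ^ (-(d : ℝ) / 4) : ℝ) : ℂ) *
      f (quadMapInv d ξ) := rfl

lemma PhiOp_apply (f : (Fin d → ℝ) → ℂ) (ξ : Fin d → ℝ) :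
    PhiOp d f ξ = (((2 : ℝ) ^ ((1 - (d : ℝ)) / 2) * |ξ 0| ^ ((d : ℝ) / 2) : ℝ) : ℂ) *
      f (quadMap d ξ) := rfl

lemma quadMap_smul (c : ℝ) (x : Fin d → ℝ) : quadMap d (c • x) = c ^ 2 • quadMap d x := by
  simp only [quadMap, Pi.smul_apply, smul_eq_mul, smul_smul]
  ring_nf

lemma quadMapInv_apply_zero {ξ : Fin d → ℝ} (hξ : ξ 0 < 0) :
    quadMapInv d ξ 0 = -(Real.sqrt 2 * Real.sqrt (-ξ 0)) := by
  have ht : Real.sqrt (-ξ 0) * Real.sqrt (-ξ 0) = -ξ 0 := Real.mul_self_sqrt (by linarith)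
  have hpos : 0 < Real.sqrt (-ξ 0) := Real.sqrt_pos.mpr (by linarith)
  simp only [quadMapInv, Pi.smul_apply, smul_eq_mul]
  field_simp
  linarith

lemma quadMap_quadMapInv {ξ : Fin d → ℝ} (hξ : ξ 0 < 0) : quadMap d (quadMapInv d ξ) = ξ := by
  have h2 : Real.sqrt 2 * Real.sqrt 2 = 2 := Real.mul_self_sqrt (by norm_num)
  have hpos : 0 < Real.sqrt (-ξ 0) := Real.sqrt_pos.mpr (by linarith)
  rw [quadMap, quadMapInv_apply_zero hξ, quadMapInv, smul_smul]
  convert one_smul ℝ ξ using 2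
  field_simp
  linear_combination h2

lemma transpose_mulVec_apply_zero {h : Matrix (Fin d) (Fin d) ℝ} (hcol : ∀ i, 0 < i → h i 0 = 0)
    (x : Fin d → ℝ) : (hᵀ *ᵥ x) 0 = h 0 0 * x 0 := by
  simp only [mulVec, dotProduct, transpose_apply]
  exact Finset.sum_eq_single 0 (fun i _ hi => by rw [hcol i (Fin.pos_iff_ne_zero.mpr hi), zero_mul])
    (by simp)

lemma quadMap_transpose_mulVec {h : Matrix (Fin d) (Fin d) ℝ} (hcol : ∀ i, 0 < i → h i 0 = 0)
    (x : Fin d → ℝ) : quadMap d (hᵀ *ᵥ x) = h 0 0 • (hᵀ *ᵥ quadMap d x) := by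
  rw [quadMap, quadMap, transpose_mulVec_apply_zero hcol, mulVec_smul, smul_smul]
  ring_nf

lemma dotProd_sigmaMat_mulVec_self (b η : Fin d → ℝ) :
    dotProd d (sigmaMat d b *ᵥ η) η = -2 * dotProd d b (quadMap d η) := by
  have hσ : ∀ i j : Fin d, sigmaMat d b i j =
      (if i = 0 then b j / 2 else 0) + (if j = 0 then b i / 2 else 0) := by
    intro i j
    by_cases hi : i = 0 <;> by_cases hj : j = 0 <;> simp [sigmaMat, hi, hj]
  simp only [dotProd, quadMap, mulVec, dotProduct, hσ, add_mul, Finset.sum_add_distrib,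
    ite_mul, zero_mul, Finset.sum_ite_irrel, Finset.sum_const_zero, Finset.sum_ite_eq',
    Finset.mem_univ, if_true, Pi.smul_apply, smul_eq_mul]
  rw [Finset.sum_mul, Finset.mul_sum, ← Finset.sum_add_distrib]
  exact Finset.sum_congr rfl fun i _ => by ring

end QuadraticMap

lemma intertwining_constant (d : ℕ) {s t D : ℝ} (hs : 0 < s) (ht : 0 < t) (hD : 0 < D) :
    (2 : ℝ) ^ (((d : ℝ) - 2) / 4) * t ^ (-(d : ℝ) / 4) *
      ((s ^ d / D) ^ (-(1 : ℝ) / 2) *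
        ((2 : ℝ) ^ ((1 - (d : ℝ)) / 2) * (s * (Real.sqrt 2 * Real.sqrt t)) ^ ((d : ℝ) / 2))) =
      D ^ ((1 : ℝ) / 2) := by
  have h2 : (0 : ℝ) < 2 := two_pos
  apply Real.log_injOn_pos (Set.mem_Ioi.mpr (by positivity)) (Set.mem_Ioi.mpr (by positivity))
  rw [Real.log_rpow hD, Real.log_mul (by positivity) (by positivity),
    Real.log_mul (by positivity) (by positivity), Real.log_mul (by positivity) (by positivity),
    Real.log_mul (by positivity) (by positivity), Real.log_rpow h2, Real.log_rpow ht,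
    Real.log_rpow (by positivity), Real.log_rpow h2, Real.log_rpow (by positivity),
    Real.log_div (by positivity) hD.ne', Real.log_pow, Real.log_mul hs.ne' (by positivity),
    Real.log_mul (by positivity) (by positivity), Real.log_sqrt h2.le, Real.log_sqrt ht.le]
  ring

section RhoMap

variable {d : ℕ} [NeZero d]

lemma rhoMap_inv {h : Matrix (Fin d) (Fin d) ℝ} (hdet : IsUnit h.det) (h00 : 0 < h 0 0) :
    (rhoMap d h)⁻¹ = (Real.sqrt (h 0 0))⁻¹ • hᵀ := by
  have hs : Real.sqrt (h 0 0) ≠ 0 := (Real.sqrt_pos.mpr h00).ne'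
  apply inv_eq_right_inv
  rw [rhoMap, Matrix.smul_mul, Matrix.mul_smul, smul_smul, mul_inv_cancel₀ hs, ← transpose_mul,
    mul_nonsing_inv h hdet, transpose_one, one_smul]

lemma abs_det_rhoMap (h : Matrix (Fin d) (Fin d) ℝ) :
    |(rhoMap d h).det| = Real.sqrt (h 0 0) ^ d / |h.det| := by
  rw [rhoMap, det_smul, det_transpose, det_nonsing_inv, Ring.inverse_eq_inv', abs_mul, abs_pow,
    abs_of_nonneg (Real.sqrt_nonneg _), abs_inv, Fintype.card_fin, div_eq_mul_inv]

variable {h : Matrix (Fin d) (Fin d) ℝ} {ξ : Fin d → ℝ}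

lemma quadMap_rhoMap_inv_mulVec_quadMapInv (hh : h ∈ Tplus d) (hξ : ξ 0 < 0) :
    quadMap d ((rhoMap d h)⁻¹ *ᵥ quadMapInv d ξ) = hᵀ *ᵥ ξ := by
  obtain ⟨hu, h00, htri⟩ := hh
  have hs : Real.sqrt (h 0 0) ^ 2 = h 0 0 := Real.sq_sqrt h00.le
  rw [rhoMap_inv ((isUnit_iff_isUnit_det h).mp hu) h00, smul_mulVec, quadMap_smul,
    quadMap_transpose_mulVec (fun i hi => htri i 0 hi), quadMap_quadMapInv hξ, smul_smul,
    inv_pow, hs, inv_mul_cancel₀ h00.ne', one_smul]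

lemma rhoMap_inv_mulVec_quadMapInv_apply_zero (hh : h ∈ Tplus d) (hξ : ξ 0 < 0) :
    ((rhoMap d h)⁻¹ *ᵥ quadMapInv d ξ) 0 =
      -(Real.sqrt (h 0 0) * (Real.sqrt 2 * Real.sqrt (-ξ 0))) := by
  obtain ⟨hu, h00, htri⟩ := hh
  have hs0 : Real.sqrt (h 0 0) ≠ 0 := (Real.sqrt_pos.mpr h00).ne'
  rw [rhoMap_inv ((isUnit_iff_isUnit_det h).mp hu) h00, smul_mulVec, Pi.smul_apply,
    transpose_mulVec_apply_zero (fun i hi => htri i 0 hi), quadMapInv_apply_zero hξ, smul_eq_mul]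
  field_simp
  rw [Real.sq_sqrt h00.le]

end RhoMap

/-- For `h ∈ T(d,ℝ)_+` and `b ∈ ℝ^d`, the intertwining identity
`(Ψ(μ_{b,h}(Φf)))(ξ) = |det h|^{1/2} e^{-2πi⟨b,ξ⟩} f(hᵀξ)` holds for every
`f : ℝ^d → ℂ` and every `ξ` with `ξ_1 < 0`. -/
theorem statement17 (d : ℕ) [NeZero d]
    (h : Matrix (Fin d) (Fin d) ℝ) (hh : h ∈ Tplus d) (b : Fin d → ℝ) :
    ∀ (f : (Fin d → ℝ) → ℂ) (ξ : Fin d → ℝ), ξ 0 < 0 →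
      PsiOp d (muOp d b h (PhiOp d f)) ξ =
        ((|h.det| ^ ((1 : ℝ) / 2) : ℝ) : ℂ) *
          Complex.exp (((-2 * Real.pi * dotProd d b ξ : ℝ) : ℂ) * Complex.I) *
          f (hᵀ.mulVec ξ) := by
  intro f ξ hξ
  have hs : 0 < Real.sqrt (h 0 0) := Real.sqrt_pos.mpr hh.2.1
  have ht : 0 < -ξ 0 := neg_pos.mpr hξ
  have hD : 0 < |h.det| := abs_pos.mpr ((isUnit_iff_isUnit_det h).mp hh.1).ne_zero
  rw [PsiOp_apply, muOp, PhiOp_apply, quadMap_rhoMap_inv_mulVec_quadMapInv hh hξ,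
    rhoMap_inv_mulVec_quadMapInv_apply_zero hh hξ, dotProd_sigmaMat_mulVec_self,
    quadMap_quadMapInv hξ, abs_det_rhoMap, abs_neg, abs_of_neg hξ,
    abs_of_pos (mul_pos hs (mul_pos (by positivity) (Real.sqrt_pos.mpr ht))),
    ← intertwining_constant d hs ht hD]
  push_cast
  ring_nf

end
end
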